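/- For any group 1/r(1,a), the ℂ-algebra homomorphism φ : ℂ[𝗓] → ℛ maps onto the invariant ring ℛ^G (i.e. the image of φ equals ℛ^G), and QDet(𝗓) is contained in the kernel of φ; in particular φ(q_{i,j}) = 0 for every quasiminor q_{i,j}. -/

import Mathlib

open MvPolynomial
open Fin.NatCast

/-- Hirzebruch–Jung continued fraction `[γ_1,…,γ_s] = γ_1 − 1/(γ_2 − 1/(⋯ − 1/γ_s))`
(with the Mathlib convention `1/0 = 0`, so that `hjcf [γ] = γ`). -/
def hjcf : List ℚ → ℚ
  | [] => 0
  | g :: rest => g - 1 / hjcf rest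

/-- Arrows of the quiver of the reconstruction algebra of type `A`:
`Sum.inl v` is the clockwise arrow `c_{v,v-1} : v → v−1` (`c_{0,n} : 0 → n` for `v = 0`),
`Sum.inr (Sum.inl v)` is the anticlockwise arrow `a_{v,v+1} : v → v+1` (`a_{n,0}` for `v = n`),
`Sum.inr (Sum.inr h)` is the extra arrow `k_{h+1} : l_{h+1} → 0`. -/
abbrev Arrow (n ℓ : ℕ) : Type := Fin (n + 1) ⊕ (Fin (n + 1) ⊕ Fin ℓ)

/-- The clockwise arrow `c_{v,v−1}` (indices mod `n+1`). -/
def cc (n ℓ : ℕ) (v : ℕ) : Arrow n ℓ := Sum.inl (v : Fin (n + 1))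

/-- The anticlockwise arrow `a_{v,v+1}` (indices mod `n+1`). -/
def aa (n ℓ : ℕ) (v : ℕ) : Arrow n ℓ := Sum.inr (Sum.inl (v : Fin (n + 1)))

/-- The arrow `k_h`, with the conventions `k_0 = c_{1,0}` and `k_h = a_{n,0}` for `h > ℓ`
(in particular `k_{ℓ+1} = a_{n,0}`). -/
def kArr (n ℓ : ℕ) (h : ℕ) : Arrow n ℓ :=
  if hh : 1 ≤ h ∧ h ≤ ℓ then Sum.inr (Sum.inr ⟨h - 1, by omega⟩)
  else if h = 0 then cc n ℓ 1 else aa n ℓ n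

/-- Tail vertex of an arrow, where `L h` is the tail of `k_h`. -/
def tl (n ℓ : ℕ) (L : ℕ → ℕ) : Arrow n ℓ → Fin (n + 1)
  | Sum.inl v => v
  | Sum.inr (Sum.inl v) => v
  | Sum.inr (Sum.inr h) => ((L (h.val + 1) : ℕ) : Fin (n + 1))

/-- Head vertex of an arrow. -/
def hd (n ℓ : ℕ) : Arrow n ℓ → Fin (n + 1)
  | Sum.inl v => ((v.val + n : ℕ) : Fin (n + 1))
  | Sum.inr (Sum.inl v) => ((v.val + 1 : ℕ) : Fin (n + 1))
  | Sum.inr (Sum.inr _) => 0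

/-- The action of a torus element `μ ∈ G = (ℂ*)^{Q_0}` on
`ℛ = ℂ[x_q : q ∈ Q_1]`, via `μ · x_q = μ_{t q}⁻¹ μ_{h q} x_q`. -/
noncomputable def torusAct (n ℓ : ℕ) (L : ℕ → ℕ) (μ : Fin (n + 1) → ℂˣ) :
    MvPolynomial (Arrow n ℓ) ℂ →ₐ[ℂ] MvPolynomial (Arrow n ℓ) ℂ :=
  aeval fun q => C ((μ (tl n ℓ L q) : ℂ)⁻¹ * (μ (hd n ℓ q) : ℂ)) * X q

/-- The invariant subalgebra `ℛ^G`. -/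
noncomputable def invAlg (n ℓ : ℕ) (L : ℕ → ℕ) :
    Subalgebra ℂ (MvPolynomial (Arrow n ℓ) ℂ) where
  carrier := {f | ∀ μ, torusAct n ℓ L μ f = f}
  mul_mem' := fun ha hb μ => by rw [map_mul, ha μ, hb μ]
  add_mem' := fun ha hb μ => by rw [map_add, ha μ, hb μ]
  algebraMap_mem' := fun c μ => (torusAct n ℓ L μ).commutes c

/-- `x_{C_{0,j}}`: the monomial of the clockwise path from `0` to `j`
(for `j = 0` this is the full clockwise loop `C_{0,0}`). -/
noncomputable def xC0 (n ℓ : ℕ) (j : ℕ) : MvPolynomial (Arrow n ℓ) ℂ :=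
  X (cc n ℓ 0) * ∏ v ∈ Finset.Icc (j + 1) n, X (cc n ℓ v)

/-- `x_{A_{0,j}}`: the monomial of the anticlockwise path from `0` to `j` (for `j ≥ 1`). -/
noncomputable def xA0 (n ℓ : ℕ) (j : ℕ) : MvPolynomial (Arrow n ℓ) ℂ :=
  ∏ v ∈ Finset.range j, X (aa n ℓ v)

/-- The cycle monomials `z_{i,j}`: `z_{0,0} = x_{C_{0,0}}`; for `1 ≤ i ≤ e−2 = ℓ+1`:
`z_{i,0} = x_{C_{0,l_i}}·x_{k_i}`, `z_{i,s_i} = x_{A_{0,l_{i−1}}}·x_{k_{i−1}}`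
(where `s_i = l_i − l_{i−1} + 1`), and
`z_{i,j} = x_{c_{l_i−j+1,l_i−j}}·x_{a_{l_i−j,l_i−j+1}}` for `1 ≤ j ≤ l_i − l_{i−1}`;
finally `z_{e−1,0} = z_{ℓ+2,0} = x_{A_{0,0}}`. -/
noncomputable def zmon (n ℓ : ℕ) (L : ℕ → ℕ) (i j : ℕ) : MvPolynomial (Arrow n ℓ) ℂ :=
  if i = 0 then ∏ v ∈ Finset.range (n + 1), X (cc n ℓ v)
  else if i = ℓ + 2 then ∏ v ∈ Finset.range (n + 1), X (aa n ℓ v)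
  else if j = 0 then xC0 n ℓ (L i) * X (kArr n ℓ i)
  else if j = L i - L (i - 1) + 1 then xA0 n ℓ (L (i - 1)) * X (kArr n ℓ (i - 1))
  else X (cc n ℓ (L i - j + 1)) * X (aa n ℓ (L i - j))

/-- Number of `j`-indices of the variables `𝗓_{i,j}` in row `i`: one variable `𝗓_{0,0}`
for `i = 0`, one variable `𝗓_{m+1,0}` for `i = m+1`, and `s_i + 1` variables
`𝗓_{i,0},…,𝗓_{i,s_i}` for `1 ≤ i ≤ m`. -/
def nj (m : ℕ) (s : ℕ → ℕ) (i : ℕ) : ℕ := if i = 0 ∨ i = m + 1 then 1 else s i + 1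

/-- The index type of the variables of the polynomial ring `ℂ[𝗓]`. -/
abbrev ZIdx (m : ℕ) (s : ℕ → ℕ) : Type := Σ i : Fin (m + 2), Fin (nj m s i.val)

/-- The variable index `(i,j)` (with a junk value for out-of-range indices). -/
def zidx (m : ℕ) (s : ℕ → ℕ) (i j : ℕ) : ZIdx m s :=
  if h : i < m + 2 ∧ j < nj m s i then ⟨⟨i, h.1⟩, ⟨j, h.2⟩⟩
  else ⟨⟨0, by omega⟩, ⟨0, by simp [nj]⟩⟩

/-- The polynomial ring `ℂ[𝗓]`. -/
abbrev CZ (m : ℕ) (s : ℕ → ℕ) : Type := MvPolynomial (ZIdx m s) ℂ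

/-- The variable `𝗓_{i,j}`. -/
noncomputable def Zv (m : ℕ) (s : ℕ → ℕ) (i j : ℕ) : CZ m s := X (zidx m s i j)

/-- `W_t = 𝗓_{t,1}·𝗓_{t,2}⋯𝗓_{t,s_t−1}`. -/
noncomputable def Wq (m : ℕ) (s : ℕ → ℕ) (t : ℕ) : CZ m s :=
  ∏ u ∈ Finset.Icc 1 (s t - 1), Zv m s t u

/-- The quasiminor `q_{i,j} = 𝗓_{i−1,0}·𝗓_{j,s_j} − 𝗓_{i,s_i}·(∏_{t=i}^{j−1} W_t)·𝗓_{j−1,0}`. -/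
noncomputable def qm (m : ℕ) (s : ℕ → ℕ) (i j : ℕ) : CZ m s :=
  Zv m s (i - 1) 0 * Zv m s j (s j)
    - Zv m s i (s i) * (∏ t ∈ Finset.Icc i (j - 1), Wq m s t) * Zv m s (j - 1) 0

/-- The quasideterminantal ideal `QDet(𝗓)`, generated by the quasiminors `q_{i,j}`
for `1 ≤ i < j ≤ m+1`. -/
noncomputable def QDet (m : ℕ) (s : ℕ → ℕ) : Ideal (CZ m s) :=
  Ideal.span {q | ∃ i j : ℕ, 1 ≤ i ∧ i < j ∧ j ≤ m + 1 ∧ q = qm m s i j}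

/-- `s_t = β_t − 1` for `1 ≤ t ≤ m` and `s_{m+1} = 0`. -/
def sfun (m : ℕ) (β : ℕ → ℕ) (t : ℕ) : ℕ := if t ≤ m then β t - 1 else 0

/-- `E = 𝗓_{0,0}·𝗓_{2,s_2}·𝗓_{3,s_3}⋯𝗓_{m+1,s_{m+1}}`. -/
noncomputable def Emon (m : ℕ) (s : ℕ → ℕ) : CZ m s :=
  Zv m s 0 0 * ∏ t ∈ Finset.Icc 2 (m + 1), Zv m s t (s t)

/-- The `ℂ`-algebra homomorphism `φ : ℂ[𝗓] → ℛ` sending each variable `𝗓_{i,j}` to the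
corresponding cycle monomial `z_{i,j}` (with `𝗓_{m+1,0} ↦ z_{e−1,0} = z_{ℓ+2,0}`,
noting `m + 1 = ℓ + 2`). -/
noncomputable def phiMap (n ℓ m : ℕ) (L : ℕ → ℕ) (s : ℕ → ℕ) :
    CZ m s →ₐ[ℂ] MvPolynomial (Arrow n ℓ) ℂ :=
  aeval fun p : ZIdx m s => zmon n ℓ L p.1.val p.2.val

/-!
A monomial of `ℛ` is `G`-invariant exactly when its exponent vector `d` is a circulation on `Q`
(inflow equals outflow at every vertex): evaluate the character of `d` on a torus element that
is `2` at one vertex and `1` elsewhere. The torus scales the monomial of a path from `u` to `v` by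
`μ_u⁻¹ μ_v`, so every cycle monomial `z_{i,j}` is invariant, and `im φ ⊆ ℛ^G`.

Conversely, every nonzero circulation `d` contains one of the cycles `z_{i,j}`. The clockwise
excess `g(v) = d(c_{v+1,v}) − d(a_{v,v+1})` across the edge `{v, v+1}` is nondecreasing in `v`,
and it jumps at the tail `l_h` of every extra arrow `k_h` used by `d`. If `g(l_h) > 0`, then `d`
contains the clockwise path `C_{0,l_h}`, so it contains `z_{h,0} = C_{0,l_h} k_h`; otherwise it
contains `A_{0,l_h}`, so it contains `z_{h+1,s_{h+1}}`. Without extra arrows `g` is constant, and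
its sign gives one of the two loops `z_{0,0}`, `z_{e−1,0}` or a two-cycle `c_{v+1,v} a_{v,v+1}`.
Removing that cycle leaves an invariant monomial (`ℛ` is a domain), and induction shows
`ℛ^G ⊆ im φ`.

A quasiminor vanishes because both of its terms are the same monomial:
`C_{0,l_{i−1}} = C_{0,l_{j−1}} · ∏ c` and `A_{0,l_{j−1}} = A_{0,l_{i−1}} · ∏ a` over the arrows
between `l_{i−1}` and `l_{j−1}`, and `∏_{t=i}^{j−1} φ(W_t)` is the product of exactly these
two-cycles.
-/

namespace MvPolynomial

variable {σ R : Type*} [CommSemiring R]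

theorem aeval_C_mul_X_monomial (c : σ → R) (d : σ →₀ ℕ) (b : R) :
    aeval (fun i => C (c i) * X i) (monomial d b) =
      monomial d ((d.prod fun i k => c i ^ k) * b) := by
  rw [aeval_monomial, monomial_eq]
  simp only [mul_pow, Finsupp.prod_mul, ← map_pow, ← map_finsuppProd, algebraMap_eq, C_mul]
  ring

theorem coeff_aeval_C_mul_X (c : σ → R) (f : MvPolynomial σ R) (d : σ →₀ ℕ) :
    coeff d (aeval (fun i => C (c i) * X i) f) = (d.prod fun i k => c i ^ k) * coeff d f := by
  classical
  induction f using MvPolynomial.induction_on' with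
  | monomial e b =>
    rw [aeval_C_mul_X_monomial, coeff_monomial, coeff_monomial]
    split_ifs with h
    · rw [h]
    · rw [mul_zero]
  | add p q hp hq => rw [map_add, coeff_add, coeff_add, hp, hq, mul_add]

variable {A : Subalgebra R (MvPolynomial σ R)} {d : σ →₀ ℕ}

theorem exists_monomial_le_of_prod_X_mem {S : Finset σ} (hS : S.Nonempty)
    (hd : ∀ i ∈ S, 1 ≤ d i) (hA : ∏ i ∈ S, X i ∈ A) : ∃ e ≤ d, e ≠ 0 ∧ monomial e 1 ∈ A := by
  classical
  obtain ⟨i, hi⟩ := hS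
  refine ⟨∑ i ∈ S, Finsupp.single i 1, fun j => ?_, ?_, by rwa [monomial_sum_one]⟩
  · simp only [Finsupp.coe_finsetSum, Finset.sum_apply, Finsupp.single_apply,
      Finset.sum_ite_eq']
    split_ifs with hj
    · exact hd j hj
    · exact Nat.zero_le _
  · refine ne_of_apply_ne (· i) ?_
    simp [Finsupp.single_apply, hi]

theorem exists_monomial_le_of_prod_X_comp_mem {ι : Type*} {s : Finset ι} (hs : s.Nonempty)
    {g : ι → σ} (hg : Set.InjOn g s) (hd : ∀ a ∈ s, 1 ≤ d (g a))
    (hA : ∏ a ∈ s, X (g a) ∈ A) : ∃ e ≤ d, e ≠ 0 ∧ monomial e 1 ∈ A := by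
  classical
  refine exists_monomial_le_of_prod_X_mem (hs.image g) ?_ (by rwa [Finset.prod_image hg])
  simpa using hd

theorem exists_monomial_le_of_prod_X_comp_mul_X_mem {ι : Type*} {s : Finset ι} {g : ι → σ}
    (hg : Set.InjOn g s) {q : σ} (hq : ∀ a ∈ s, g a ≠ q) (hd : ∀ a ∈ s, 1 ≤ d (g a))
    (hdq : 1 ≤ d q) (hA : (∏ a ∈ s, X (g a)) * X q ∈ A) :
    ∃ e ≤ d, e ≠ 0 ∧ monomial e 1 ∈ A := by
  classical
  have hqs : q ∉ s.image g := by simpa using hq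
  refine exists_monomial_le_of_prod_X_mem (Finset.insert_nonempty q (s.image g)) ?_ ?_
  · simpa [hdq] using hd
  · rwa [Finset.prod_insert hqs, Finset.prod_image hg, mul_comm]

end MvPolynomial

section Circulations

variable {σ V : Type*} [Fintype σ] [DecidableEq V]

def IsBalanced (t h : σ → V) (d : σ →₀ ℕ) : Prop :=
  ∀ v, ∑ q, (if h q = v then d q else 0) = ∑ q, (if t q = v then d q else 0)

theorem isBalanced_of_forall_prod_eq_one {t h : σ → V} {d : σ →₀ ℕ}
    (hd : ∀ μ : V → ℂˣ, (d.prod fun q k => ((μ (t q) : ℂ)⁻¹ * μ (h q)) ^ k) = 1) :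
    IsBalanced t h d := by
  intro v
  let μ : V → ℂˣ := fun u => if u = v then Units.mk0 2 two_ne_zero else 1
  have hμ : ∀ f : σ → V, ∏ q, (μ (f q) : ℂ) ^ d q = 2 ^ ∑ q, (if f q = v then d q else 0) := by
    intro f
    rw [← Finset.prod_pow_eq_pow_sum]
    refine Finset.prod_congr rfl fun q _ => ?_
    by_cases hq : f q = v <;> simp [μ, hq]
  have h1 := hd μ
  rw [Finsupp.prod_fintype _ _ fun q => pow_zero _] at h1
  simp only [mul_pow, Finset.prod_mul_distrib, inv_pow, Finset.prod_inv_distrib, hμ] at h1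
  have h2 : ((2 : ℕ) : ℂ) ^ ∑ q, (if h q = v then d q else 0) =
      ((2 : ℕ) : ℂ) ^ ∑ q, (if t q = v then d q else 0) := by
    rw [inv_mul_eq_one₀ (pow_ne_zero _ two_ne_zero)] at h1
    exact_mod_cast h1.symm
  exact Nat.pow_right_injective le_rfl (by exact_mod_cast h2)

end Circulations

theorem Fin.natCast_self_eq_neg_one (n : ℕ) : ((n : ℕ) : Fin (n + 1)) = -1 :=
  eq_neg_of_add_eq_zero_left (by exact_mod_cast Fin.natCast_self (n + 1))

structure IsTailSeq (n ℓ : ℕ) (L : ℕ → ℕ) : Prop where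
  zero : L 0 = 1
  top : L (ℓ + 1) = n
  mono : MonotoneOn L (Set.Iic (ℓ + 1))

namespace IsTailSeq

variable {n ℓ : ℕ} {L : ℕ → ℕ} (hL : IsTailSeq n ℓ L)
include hL

theorem le_n {h : ℕ} (hh : h ≤ ℓ + 1) : L h ≤ n :=
  hL.top ▸ hL.mono (Set.mem_Iic.2 hh) (Set.mem_Iic.2 le_rfl) hh

theorem one_le {h : ℕ} (hh : h ≤ ℓ + 1) : 1 ≤ L h :=
  hL.zero ▸ hL.mono (Set.mem_Iic.2 (Nat.zero_le _)) (Set.mem_Iic.2 hh) (Nat.zero_le h)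

theorem one_le_n : 1 ≤ n := hL.top ▸ hL.one_le le_rfl

end IsTailSeq

section Quiver

variable {n ℓ : ℕ} {L : ℕ → ℕ}

theorem hd_inl (u : Fin (n + 1)) : hd n ℓ (Sum.inl u) = u - 1 := by
  rw [hd, Nat.cast_add, Fin.cast_val_eq_self, Fin.natCast_self_eq_neg_one, sub_eq_add_neg]

theorem hd_inr_inl (u : Fin (n + 1)) : hd n ℓ (Sum.inr (Sum.inl u)) = u + 1 := by
  rw [hd, Nat.cast_add, Fin.cast_val_eq_self, Nat.cast_one]

theorem hd_cc_succ (v : ℕ) : hd n ℓ (cc n ℓ (v + 1)) = v := by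
  rw [cc, hd_inl, Nat.cast_succ, add_sub_cancel_right]

theorem hd_aa (v : ℕ) : hd n ℓ (aa n ℓ v) = ((v + 1 : ℕ) : Fin (n + 1)) := by
  rw [aa, hd_inr_inl]; push_cast; rfl

theorem cc_self_succ : cc n ℓ (n + 1) = cc n ℓ 0 := by
  simp [cc]

theorem kArr_zero : kArr n ℓ 0 = cc n ℓ 1 := by simp [kArr]

theorem kArr_succ_ell : kArr n ℓ (ℓ + 1) = aa n ℓ n := by simp [kArr]

theorem tl_kArr (hL : IsTailSeq n ℓ L) {h : ℕ} (hh : h ≤ ℓ + 1) :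
    tl n ℓ L (kArr n ℓ h) = L h := by
  unfold kArr
  split_ifs with h1 h0
  · simp only [tl, Nat.sub_add_cancel h1.1]
  · rw [h0, hL.zero]; rfl
  · rw [show h = ℓ + 1 by omega, hL.top]; rfl

theorem hd_kArr (h : ℕ) : hd n ℓ (kArr n ℓ h) = 0 := by
  unfold kArr
  split_ifs
  · rfl
  · rw [hd_cc_succ, Nat.cast_zero]
  · rw [hd_aa, Fin.natCast_self]

theorem natCast_injOn_Iic : Set.InjOn (fun v : ℕ => (v : Fin (n + 1))) (Set.Iic n) := by
  intro a ha b hb h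
  have := congrArg Fin.val h
  simp only [Fin.val_natCast] at this
  rwa [Nat.mod_eq_of_lt (Nat.lt_succ_of_le ha), Nat.mod_eq_of_lt (Nat.lt_succ_of_le hb)] at this

theorem aa_injOn : Set.InjOn (aa n ℓ) (Set.Iic n) := fun _ ha _ hb h =>
  natCast_injOn_Iic ha hb (Sum.inl_injective (Sum.inr_injective h))

theorem cc_succ_injOn : Set.InjOn (fun v => cc n ℓ (v + 1)) (Set.Iic n) := by
  intro a ha b hb h
  have h' : ((a : ℕ) : Fin (n + 1)) + 1 = b + 1 := by exact_mod_cast Sum.inl_injective h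
  exact natCast_injOn_Iic ha hb (add_right_cancel h')

theorem xC0_eq_prod_Ico {j : ℕ} (hj : j ≤ n) :
    xC0 n ℓ j = ∏ v ∈ Finset.Ico j (n + 1), X (cc n ℓ (v + 1)) := by
  rw [Finset.prod_Ico_succ_top hj, cc_self_succ, xC0, mul_comm,
    Finset.prod_Ico_add' (fun v => X (cc n ℓ v)), Finset.Ico_add_one_right_eq_Icc]

noncomputable def xCA (n ℓ : ℕ) (v : ℕ) : MvPolynomial (Arrow n ℓ) ℂ :=
  X (cc n ℓ (v + 1)) * X (aa n ℓ v)

end Quiver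

section Invariants

variable {n ℓ : ℕ} {L : ℕ → ℕ}

theorem monomial_mem_invAlg_of_mem_support {f : MvPolynomial (Arrow n ℓ) ℂ}
    (hf : f ∈ invAlg n ℓ L) {d : Arrow n ℓ →₀ ℕ} (hdf : d ∈ f.support) :
    monomial d 1 ∈ invAlg n ℓ L := by
  intro μ
  have h := congrArg (coeff d) (hf μ)
  rw [torusAct, coeff_aeval_C_mul_X, mul_eq_right₀ (mem_support_iff.mp hdf)] at h
  rw [torusAct, aeval_C_mul_X_monomial, h, one_mul]

theorem isBalanced_of_monomial_mem_invAlg {d : Arrow n ℓ →₀ ℕ}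
    (hmem : monomial d 1 ∈ invAlg n ℓ L) : IsBalanced (tl n ℓ L) (hd n ℓ) d := by
  refine isBalanced_of_forall_prod_eq_one fun μ => ?_
  have h := congrArg (coeff d) (hmem μ)
  rwa [torusAct, coeff_aeval_C_mul_X, coeff_monomial, if_pos rfl, mul_one] at h

theorem mem_invAlg_of_mul_mem {a b : MvPolynomial (Arrow n ℓ) ℂ} (ha : a ∈ invAlg n ℓ L)
    (ha0 : a ≠ 0) (hab : a * b ∈ invAlg n ℓ L) : b ∈ invAlg n ℓ L := fun μ =>
  mul_left_cancel₀ ha0 (by rw [← hab μ, map_mul, ha μ])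

noncomputable def arrowWeight (L : ℕ → ℕ) (μ : Fin (n + 1) → ℂˣ) (q : Arrow n ℓ) : ℂˣ :=
  (μ (tl n ℓ L q))⁻¹ * μ (hd n ℓ q)

theorem torusAct_X (μ : Fin (n + 1) → ℂˣ) (q : Arrow n ℓ) :
    torusAct n ℓ L μ (X q) = C (arrowWeight L μ q : ℂ) * X q := by
  simp [torusAct, arrowWeight]

theorem torusAct_prod_X {ι : Type*} (μ : Fin (n + 1) → ℂˣ) (s : Finset ι) (g : ι → Arrow n ℓ) :
    torusAct n ℓ L μ (∏ a ∈ s, X (g a)) =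
      C ((∏ a ∈ s, arrowWeight L μ (g a) : ℂˣ) : ℂ) * ∏ a ∈ s, X (g a) := by
  simp only [map_prod, torusAct_X, Finset.prod_mul_distrib, Units.coe_prod]

theorem mul_mem_invAlg_of_torusAct {a b : MvPolynomial (Arrow n ℓ) ℂ}
    (c : (Fin (n + 1) → ℂˣ) → ℂˣ) (ha : ∀ μ, torusAct n ℓ L μ a = C (c μ : ℂ) * a)
    (hb : ∀ μ, torusAct n ℓ L μ b = C (((c μ)⁻¹ : ℂˣ) : ℂ) * b) : a * b ∈ invAlg n ℓ L :=
  fun μ => by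
    rw [map_mul, ha, hb, mul_mul_mul_comm, ← C_mul, ← Units.val_mul, mul_inv_cancel,
      Units.val_one, C_1, one_mul]

theorem arrowWeight_cc_succ (μ : Fin (n + 1) → ℂˣ) (v : ℕ) :
    arrowWeight L μ (cc n ℓ (v + 1)) = (μ (v + 1 : ℕ))⁻¹ * μ v := by
  rw [arrowWeight, hd_cc_succ]; rfl

theorem arrowWeight_aa (μ : Fin (n + 1) → ℂˣ) (v : ℕ) :
    arrowWeight L μ (aa n ℓ v) = (μ v)⁻¹ * μ (v + 1 : ℕ) := by
  rw [arrowWeight, hd_aa]; rfl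

theorem torusAct_xC0 (μ : Fin (n + 1) → ℂˣ) {j : ℕ} (hj : j ≤ n) :
    torusAct n ℓ L μ (xC0 n ℓ j) = C (((μ 0)⁻¹ * μ j : ℂˣ) : ℂ) * xC0 n ℓ j := by
  have hw : ∀ v, arrowWeight L μ (cc n ℓ (v + 1)) = (μ (v + 1 : ℕ))⁻¹ / (μ v)⁻¹ := fun v => by
    rw [arrowWeight_cc_succ, div_inv_eq_mul]
  rw [xC0_eq_prod_Ico hj, torusAct_prod_X, Finset.prod_congr rfl fun v _ => hw v,
    Finset.prod_Ico_div (f := fun v : ℕ => (μ v)⁻¹) (by omega), Fin.natCast_self,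
    div_inv_eq_mul]

theorem torusAct_xA0 (μ : Fin (n + 1) → ℂˣ) (j : ℕ) :
    torusAct n ℓ L μ (xA0 n ℓ j) = C (((μ 0)⁻¹ * μ j : ℂˣ) : ℂ) * xA0 n ℓ j := by
  have hw : ∀ v, arrowWeight L μ (aa n ℓ v) = μ (v + 1 : ℕ) / μ v := fun v => by
    rw [arrowWeight_aa, div_eq_inv_mul]
  rw [xA0, torusAct_prod_X, Finset.prod_congr rfl fun v _ => hw v,
    Finset.prod_range_div (fun v : ℕ => μ v), Nat.cast_zero, div_eq_inv_mul]

theorem torusAct_X_kArr (hL : IsTailSeq n ℓ L) (μ : Fin (n + 1) → ℂˣ) {h : ℕ}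
    (hh : h ≤ ℓ + 1) : torusAct n ℓ L μ (X (kArr n ℓ h)) =
      C ((((μ 0)⁻¹ * μ (L h) : ℂˣ)⁻¹ : ℂˣ) : ℂ) * X (kArr n ℓ h) := by
  rw [torusAct_X, arrowWeight, tl_kArr hL hh, hd_kArr, mul_inv_rev, inv_inv]

theorem xC0_mul_X_kArr_mem_invAlg (hL : IsTailSeq n ℓ L) {h : ℕ} (hh : h ≤ ℓ + 1) :
    xC0 n ℓ (L h) * X (kArr n ℓ h) ∈ invAlg n ℓ L :=
  mul_mem_invAlg_of_torusAct _ (fun μ => torusAct_xC0 μ (hL.le_n hh))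
    fun μ => torusAct_X_kArr hL μ hh

theorem xA0_mul_X_kArr_mem_invAlg (hL : IsTailSeq n ℓ L) {h : ℕ} (hh : h ≤ ℓ + 1) :
    xA0 n ℓ (L h) * X (kArr n ℓ h) ∈ invAlg n ℓ L :=
  mul_mem_invAlg_of_torusAct _ (fun μ => torusAct_xA0 μ _) fun μ => torusAct_X_kArr hL μ hh

theorem xCA_mem_invAlg (v : ℕ) : xCA n ℓ v ∈ invAlg n ℓ L :=
  mul_mem_invAlg_of_torusAct (fun μ => arrowWeight L μ (cc n ℓ (v + 1)))
    (fun μ => torusAct_X μ _) fun μ => by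
      rw [torusAct_X, arrowWeight_aa, arrowWeight_cc_succ, mul_inv_rev, inv_inv]

end Invariants

section CycleMonomials

variable {n ℓ : ℕ} {L : ℕ → ℕ}

theorem zmon_zero_eq_xC0 (j : ℕ) : zmon n ℓ L 0 j = xC0 n ℓ 0 := by
  rw [zmon, if_pos rfl, xC0_eq_prod_Ico (Nat.zero_le n), ← Finset.range_eq_Ico,
    Finset.prod_range_succ (fun v => X (cc n ℓ (v + 1))), cc_self_succ,
    Finset.prod_range_succ' (fun v => X (cc n ℓ v))]

theorem zmon_zero (hL : IsTailSeq n ℓ L) (j : ℕ) :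
    zmon n ℓ L 0 j = xC0 n ℓ (L 0) * X (kArr n ℓ 0) := by
  rw [zmon_zero_eq_xC0, hL.zero, kArr_zero, xC0_eq_prod_Ico (Nat.zero_le n),
    Finset.prod_eq_prod_Ico_succ_bot (by omega), xC0_eq_prod_Ico hL.one_le_n, mul_comm]

theorem zmon_row_zero (hL : IsTailSeq n ℓ L) {i : ℕ} (hi : i ≤ ℓ + 1) :
    zmon n ℓ L i 0 = xC0 n ℓ (L i) * X (kArr n ℓ i) := by
  rcases Nat.eq_zero_or_pos i with rfl | hi0
  · exact zmon_zero hL 0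
  · rw [zmon, if_neg (by omega), if_neg (by omega), if_pos rfl]

theorem zmon_row_last (hL : IsTailSeq n ℓ L) {i j : ℕ} (hi1 : 1 ≤ i) (hi : i ≤ ℓ + 2)
    (hj : i ≤ ℓ + 1 → j = L i - L (i - 1) + 1) :
    zmon n ℓ L i j = xA0 n ℓ (L (i - 1)) * X (kArr n ℓ (i - 1)) := by
  rcases Nat.lt_or_ge i (ℓ + 2) with hlt | hge
  · rw [zmon, if_neg (by omega), if_neg (by omega), if_neg (by omega), if_pos (hj (by omega))]
  · obtain rfl : i = ℓ + 2 := by omega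
    rw [zmon, if_neg (by omega), if_pos rfl, show ℓ + 2 - 1 = ℓ + 1 from rfl, hL.top,
      kArr_succ_ell, xA0, Finset.prod_range_succ]

theorem zmon_mid {i j : ℕ} (hi0 : i ≠ 0) (hi : i ≠ ℓ + 2) (hj0 : j ≠ 0)
    (hj : j ≠ L i - L (i - 1) + 1) : zmon n ℓ L i j = xCA n ℓ (L i - j) := by
  rw [zmon, if_neg hi0, if_neg hi, if_neg hj0, if_neg hj, xCA]

theorem zmon_mem_invAlg (hL : IsTailSeq n ℓ L) {i : ℕ} (hi : i ≤ ℓ + 2) (j : ℕ) :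
    zmon n ℓ L i j ∈ invAlg n ℓ L := by
  by_cases hi0 : i = 0
  · rw [hi0, zmon_zero hL]
    exact xC0_mul_X_kArr_mem_invAlg hL (Nat.zero_le _)
  by_cases hitop : i = ℓ + 2
  · rw [zmon_row_last hL (by omega) hi (by omega)]
    exact xA0_mul_X_kArr_mem_invAlg hL (by omega)
  by_cases hj0 : j = 0
  · rw [hj0, zmon_row_zero hL (by omega)]
    exact xC0_mul_X_kArr_mem_invAlg hL (by omega)
  by_cases hjs : j = L i - L (i - 1) + 1
  · rw [zmon_row_last hL (by omega) hi fun _ => hjs]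
    exact xA0_mul_X_kArr_mem_invAlg hL (by omega)
  rw [zmon_mid hi0 hitop hj0 hjs]
  exact xCA_mem_invAlg _

end CycleMonomials

section Range

variable {n ℓ m : ℕ} {L : ℕ → ℕ} {s : ℕ → ℕ}

theorem phiMap_X_zidx {i j : ℕ} (hi : i < m + 2) (hj : j < nj m s i) :
    phiMap n ℓ m L s (X (zidx m s i j)) = zmon n ℓ L i j := by
  rw [phiMap, aeval_X, zidx, dif_pos ⟨hi, hj⟩]

theorem zmon_mem_range {i j : ℕ} (hi : i < m + 2) (hj : j < nj m s i) :
    zmon n ℓ L i j ∈ (phiMap n ℓ m L s).range :=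
  ⟨_, phiMap_X_zidx hi hj⟩

theorem zero_lt_nj (i : ℕ) : 0 < nj m s i := by
  unfold nj; split_ifs <;> omega

theorem range_phiMap_le_invAlg (hL : IsTailSeq n ℓ L) :
    (phiMap n ℓ (ℓ + 1) L s).range ≤ invAlg n ℓ L := by
  rw [phiMap, aeval_range, Algebra.adjoin_le_iff]
  rintro _ ⟨p, rfl⟩
  exact zmon_mem_invAlg hL (by omega) _

theorem xC0_zero_mem_range : xC0 n ℓ 0 ∈ (phiMap n ℓ (ℓ + 1) L s).range := by
  rw [← zmon_zero_eq_xC0 (L := L) 0]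
  exact zmon_mem_range (by omega) (zero_lt_nj 0)

theorem xA0_succ_n_mem_range : xA0 n ℓ (n + 1) ∈ (phiMap n ℓ (ℓ + 1) L s).range := by
  have hz : zmon n ℓ L (ℓ + 2) 0 = xA0 n ℓ (n + 1) := by
    rw [zmon, if_neg (by omega), if_pos rfl, xA0]
  exact hz ▸ zmon_mem_range (by omega) (zero_lt_nj _)

variable (hL : IsTailSeq n ℓ L)
include hL

theorem xC0_mul_X_kArr_mem_range {h : ℕ} (hh : h ≤ ℓ + 1) :
    xC0 n ℓ (L h) * X (kArr n ℓ h) ∈ (phiMap n ℓ (ℓ + 1) L s).range :=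
  zmon_row_zero hL hh ▸ zmon_mem_range (by omega) (zero_lt_nj h)

variable (hs : ∀ t, 1 ≤ t → t ≤ ℓ + 1 → s t = L t - L (t - 1) + 1)
include hs

theorem xA0_mul_X_kArr_mem_range {h : ℕ} (hh : h ≤ ℓ) :
    xA0 n ℓ (L h) * X (kArr n ℓ h) ∈ (phiMap n ℓ (ℓ + 1) L s).range := by
  have hsh := hs (h + 1) (by omega) (by omega)
  have hz := zmon_row_last hL (i := h + 1) (by omega) (by omega) fun _ => hsh
  rw [Nat.add_sub_cancel] at hz
  rw [← hz]
  refine zmon_mem_range (by omega) ?_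
  rw [nj, if_neg (by omega)]
  omega

/-- The two-cycle at the edge `{0, 1}` is `z_{1,s_1} = a_{0,1} k_0`, the one at `{n, 0}` is
`z_{ℓ+1,0} = c_{0,n} k_{ℓ+1}`, and any other one lies in the row `t` with `l_{t−1} ≤ v < l_t`. -/
theorem xCA_mem_range {v : ℕ} (hv : v ≤ n) : xCA n ℓ v ∈ (phiMap n ℓ (ℓ + 1) L s).range := by
  rcases Nat.eq_zero_or_pos v with rfl | hv0
  · have h := xA0_mul_X_kArr_mem_range hL hs (Nat.zero_le ℓ)
    rwa [hL.zero, kArr_zero, xA0, Finset.prod_range_one, mul_comm] at h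
  rcases hv.eq_or_lt with rfl | hvn
  · have h := xC0_mul_X_kArr_mem_range (s := s) hL le_rfl
    rwa [hL.top, kArr_succ_ell, xC0_eq_prod_Ico le_rfl, Nat.Ico_succ_singleton,
      Finset.prod_singleton] at h
  have hex : ∃ t, v < L t := ⟨ℓ + 1, hL.top ▸ hvn⟩
  have ht : v < L (Nat.find hex) := Nat.find_spec hex
  have htle : Nat.find hex ≤ ℓ + 1 := Nat.find_min' hex (hL.top ▸ hvn)
  have ht0 : Nat.find hex ≠ 0 := fun h => by rw [h, hL.zero] at ht; omega
  have hprev : L (Nat.find hex - 1) ≤ v :=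
    not_lt.1 (Nat.find_min hex (m := Nat.find hex - 1) (by omega))
  have hz := zmon_mid (n := n) (ℓ := ℓ) (L := L) (i := Nat.find hex) (j := L (Nat.find hex) - v)
    ht0 (by omega) (by omega) (by omega)
  rw [Nat.sub_sub_self ht.le] at hz
  rw [← hz]
  refine zmon_mem_range (by omega) ?_
  rw [nj, if_neg (by omega), hs _ (by omega) htle]
  omega

end Range

section ClockwiseExcess

variable {n ℓ : ℕ} {L : ℕ → ℕ}

def extraOutflow (L : ℕ → ℕ) (d : Arrow n ℓ →₀ ℕ) (x : Fin (n + 1)) : ℕ :=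
  ∑ h : Fin ℓ, if tl n ℓ L (Sum.inr (Sum.inr h)) = x then d (Sum.inr (Sum.inr h)) else 0

def clockwiseExcess (d : Arrow n ℓ →₀ ℕ) (v : ℕ) : ℤ := d (cc n ℓ (v + 1)) - d (aa n ℓ v)

theorem sum_ite_hd_eq (d : Arrow n ℓ →₀ ℕ) {x : Fin (n + 1)} (hx : x ≠ 0) :
    ∑ q, (if hd n ℓ q = x then d q else 0) =
      d (Sum.inl (x + 1)) + d (Sum.inr (Sum.inl (x - 1))) := by
  have hk : ∀ h : Fin ℓ, hd n ℓ (Sum.inr (Sum.inr h)) = 0 := fun _ => rfl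
  simp only [Fintype.sum_sum_type, hd_inl, hd_inr_inl, hk, sub_eq_iff_eq_add,
    ← eq_sub_iff_add_eq, Finset.sum_ite_eq', Finset.mem_univ, if_true, if_neg (Ne.symm hx),
    Finset.sum_const_zero, add_zero]

theorem sum_ite_tl_eq (d : Arrow n ℓ →₀ ℕ) (x : Fin (n + 1)) :
    ∑ q, (if tl n ℓ L q = x then d q else 0) =
      d (Sum.inl x) + d (Sum.inr (Sum.inl x)) + extraOutflow L d x := by
  have hc : ∀ u, tl n ℓ L (Sum.inl u) = u := fun _ => rfl
  have ha : ∀ u, tl n ℓ L (Sum.inr (Sum.inl u)) = u := fun _ => rfl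
  simp only [Fintype.sum_sum_type, hc, ha, Finset.sum_ite_eq', Finset.mem_univ, if_true,
    add_assoc]
  rfl

theorem exists_cc_or_aa_of_ne_zero {d : Arrow n ℓ →₀ ℕ} (hd0 : d ≠ 0)
    (hk : ∀ h : Fin ℓ, d (Sum.inr (Sum.inr h)) = 0) :
    ∃ v ≤ n, 1 ≤ d (cc n ℓ (v + 1)) ∨ 1 ≤ d (aa n ℓ v) := by
  obtain ⟨q, hq⟩ := Finsupp.ne_iff.mp hd0
  rcases q with u | u | h
  · refine ⟨(u - 1).val, Nat.lt_succ_iff.mp (u - 1).isLt, Or.inl ?_⟩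
    rw [cc, Nat.cast_succ, Fin.cast_val_eq_self, sub_add_cancel]
    exact Nat.pos_of_ne_zero hq
  · refine ⟨u.val, Nat.lt_succ_iff.mp u.isLt, Or.inr ?_⟩
    rw [aa, Fin.cast_val_eq_self]
    exact Nat.pos_of_ne_zero hq
  · exact absurd (hk h) hq

variable {d : Arrow n ℓ →₀ ℕ} (hbal : IsBalanced (tl n ℓ L) (hd n ℓ) d)
include hbal

/-- Balance at the vertex `v + 1`. -/
theorem clockwiseExcess_succ {v : ℕ} (hv : v < n) :
    clockwiseExcess d (v + 1) = clockwiseExcess d v + extraOutflow L d (v + 1 : ℕ) := by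
  have hx : ((v + 1 : ℕ) : Fin (n + 1)) ≠ 0 := fun h => Nat.succ_ne_zero v
    (natCast_injOn_Iic (Set.mem_Iic.2 hv) (Set.mem_Iic.2 (Nat.zero_le n))
      (h.trans Nat.cast_zero.symm))
  have h := hbal (v + 1 : ℕ)
  rw [sum_ite_hd_eq d hx, sum_ite_tl_eq, ← Nat.cast_succ (v + 1),
    show ((v + 1 : ℕ) : Fin (n + 1)) - 1 = v by rw [Nat.cast_succ, add_sub_cancel_right]] at h
  simp only [clockwiseExcess, cc, aa, Nat.succ_eq_add_one] at h ⊢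
  omega

theorem clockwiseExcess_mono {v w : ℕ} (hvw : v ≤ w) (hw : w ≤ n) :
    clockwiseExcess d v ≤ clockwiseExcess d w := by
  induction w, hvw using Nat.le_induction with
  | base => exact le_rfl
  | succ w _ ih =>
    rw [clockwiseExcess_succ hbal (by omega)]
    have := ih (by omega)
    omega

theorem clockwiseExcess_eq_of_forall_extra_eq_zero
    (hk : ∀ h : Fin ℓ, d (Sum.inr (Sum.inr h)) = 0) {v : ℕ} (hv : v ≤ n) :
    clockwiseExcess d v = clockwiseExcess d 0 := by
  induction v with
  | zero => rfl
  | succ v ih =>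
    rw [clockwiseExcess_succ hbal (by omega), ih (by omega), extraOutflow,
      Finset.sum_eq_zero fun h _ => by simp [hk h]]
    simp

end ClockwiseExcess

section Decomposition

variable {n ℓ : ℕ} {L : ℕ → ℕ} {s : ℕ → ℕ} {d : Arrow n ℓ →₀ ℕ}
  (hL : IsTailSeq n ℓ L) (hs : ∀ t, 1 ≤ t → t ≤ ℓ + 1 → s t = L t - L (t - 1) + 1)
  (hbal : IsBalanced (tl n ℓ L) (hd n ℓ) d)
include hL hs hbal

theorem exists_monomial_le_mem_range_of_extra {h : Fin ℓ} (hh : 1 ≤ d (Sum.inr (Sum.inr h))) :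
    ∃ e ≤ d, e ≠ 0 ∧ monomial e 1 ∈ (phiMap n ℓ (ℓ + 1) L s).range := by
  have hk : kArr n ℓ (h + 1) = Sum.inr (Sum.inr h) := by simp [kArr]
  have hw1 : 1 ≤ L (h + 1) := hL.one_le (by omega)
  have hwn : L (h + 1) ≤ n := hL.le_n (by omega)
  have hjump : clockwiseExcess d (L (h + 1) - 1) + 1 ≤ clockwiseExcess d (L (h + 1)) := by
    have hsucc := clockwiseExcess_succ hbal (v := L (h + 1) - 1) (by omega)
    rw [Nat.sub_add_cancel hw1] at hsucc
    have hle : d (Sum.inr (Sum.inr h)) ≤ extraOutflow L d (L (h + 1) : ℕ) :=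
      le_of_eq_of_le (if_pos rfl).symm (Finset.single_le_sum
        (f := fun h' : Fin ℓ => if tl n ℓ L (Sum.inr (Sum.inr h')) = (L (h + 1) : ℕ)
          then d (Sum.inr (Sum.inr h')) else 0) (fun _ _ => Nat.zero_le _) (Finset.mem_univ h))
    omega
  by_cases hpos : 1 ≤ clockwiseExcess d (L (h + 1))
  · refine exists_monomial_le_of_prod_X_comp_mul_X_mem (s := Finset.Ico (L (h + 1)) (n + 1))
      (cc_succ_injOn.mono fun v hv => by
        rw [Finset.coe_Ico, Set.mem_Ico] at hv; exact Set.mem_Iic.2 (by omega))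
      (q := kArr n ℓ (h + 1)) (fun v _ => by simp [hk, cc]) (fun v hv => ?_) (hk ▸ hh) ?_
    · rw [Finset.mem_Ico] at hv
      have := clockwiseExcess_mono hbal hv.1 (by omega)
      simp only [clockwiseExcess] at this hpos hjump
      omega
    · rw [← xC0_eq_prod_Ico hwn]
      exact xC0_mul_X_kArr_mem_range hL (by omega)
  · refine exists_monomial_le_of_prod_X_comp_mul_X_mem (s := Finset.range (L (h + 1)))
      (aa_injOn.mono fun v hv => by
        rw [Finset.coe_range, Set.mem_Iio] at hv; exact Set.mem_Iic.2 (by omega))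
      (q := kArr n ℓ (h + 1)) (fun v _ => by simp [hk, aa]) (fun v hv => ?_) (hk ▸ hh) ?_
    · rw [Finset.mem_range] at hv
      have := clockwiseExcess_mono hbal (v := v) (w := L (h + 1) - 1) (by omega) (by omega)
      simp only [clockwiseExcess] at this hpos hjump
      omega
    · show xA0 n ℓ (L (h + 1)) * X (kArr n ℓ (h + 1)) ∈ _
      exact xA0_mul_X_kArr_mem_range hL hs (by omega)

theorem exists_monomial_le_mem_range_of_forall_extra_eq_zero (hd0 : d ≠ 0)
    (hk : ∀ h : Fin ℓ, d (Sum.inr (Sum.inr h)) = 0) :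
    ∃ e ≤ d, e ≠ 0 ∧ monomial e 1 ∈ (phiMap n ℓ (ℓ + 1) L s).range := by
  have hc := fun v (hv : v ≤ n) => clockwiseExcess_eq_of_forall_extra_eq_zero hbal hk hv
  rcases lt_trichotomy (clockwiseExcess d 0) 0 with hneg | hzero | hpos
  · refine exists_monomial_le_of_prod_X_comp_mem (s := Finset.range (n + 1))
      ⟨0, Finset.mem_range.2 n.succ_pos⟩ (aa_injOn.mono fun v hv => by
        rw [Finset.coe_range, Set.mem_Iio] at hv; exact Set.mem_Iic.2 (by omega))
      (fun v hv => ?_) xA0_succ_n_mem_range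
    have := hc v (by rw [Finset.mem_range] at hv; omega)
    simp only [clockwiseExcess] at this hneg
    omega
  · obtain ⟨v, hv, hv1⟩ := exists_cc_or_aa_of_ne_zero hd0 hk
    have := hc v hv
    simp only [clockwiseExcess] at this hzero
    refine exists_monomial_le_of_prod_X_comp_mul_X_mem (s := {v}) (g := fun v => cc n ℓ (v + 1))
      (by rw [Finset.coe_singleton]; exact Set.injOn_singleton _ _) (q := aa n ℓ v)
      (by simp [cc, aa]) (by simp; omega) (by omega) ?_
    rw [Finset.prod_singleton]
    exact xCA_mem_range hL hs hv
  · refine exists_monomial_le_of_prod_X_comp_mem (s := Finset.Ico 0 (n + 1))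
      (Finset.nonempty_Ico.2 (Nat.succ_pos n)) (cc_succ_injOn.mono fun v hv => by
        rw [Finset.coe_Ico, Set.mem_Ico] at hv; exact Set.mem_Iic.2 (by omega))
      (fun v hv => ?_) (xC0_eq_prod_Ico (Nat.zero_le n) ▸ xC0_zero_mem_range)
    have := hc v (by rw [Finset.mem_Ico] at hv; omega)
    simp only [clockwiseExcess] at this hpos
    omega

theorem exists_monomial_le_mem_range (hd0 : d ≠ 0) :
    ∃ e ≤ d, e ≠ 0 ∧ monomial e 1 ∈ (phiMap n ℓ (ℓ + 1) L s).range := by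
  by_cases hk : ∃ h : Fin ℓ, 1 ≤ d (Sum.inr (Sum.inr h))
  · obtain ⟨h, hh⟩ := hk
    exact exists_monomial_le_mem_range_of_extra hL hs hbal hh
  · simp only [not_exists, not_le, Nat.lt_one_iff] at hk
    exact exists_monomial_le_mem_range_of_forall_extra_eq_zero hL hs hbal hd0 hk

end Decomposition

section Surjectivity

variable {n ℓ : ℕ} {L : ℕ → ℕ} {s : ℕ → ℕ}
  (hL : IsTailSeq n ℓ L) (hs : ∀ t, 1 ≤ t → t ≤ ℓ + 1 → s t = L t - L (t - 1) + 1)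
include hL hs

theorem monomial_mem_range_of_mem_invAlg {d : Arrow n ℓ →₀ ℕ}
    (hinv : monomial d 1 ∈ invAlg n ℓ L) : monomial d 1 ∈ (phiMap n ℓ (ℓ + 1) L s).range := by
  induction d using WellFoundedLT.induction with
  | ind d ih =>
  rcases eq_or_ne d 0 with rfl | hd0
  · rw [monomial_zero', C_1]
    exact one_mem _
  obtain ⟨e, hed, he0, he⟩ :=
    exists_monomial_le_mem_range hL hs (isBalanced_of_monomial_mem_invAlg hinv) hd0
  have hsplit : monomial d (1 : ℂ) = monomial e 1 * monomial (d - e) 1 := by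
    rw [monomial_mul, one_mul, add_tsub_cancel_of_le hed]
  rw [hsplit] at hinv ⊢
  refine mul_mem he (ih _ ?_ (mem_invAlg_of_mul_mem (range_phiMap_le_invAlg hL he)
    (monomial_eq_zero.not.mpr one_ne_zero) hinv))
  refine lt_of_le_of_ne tsub_le_self fun h => he0 ?_
  simpa [h] using tsub_add_cancel_of_le hed

theorem range_phiMap_eq_invAlg : (phiMap n ℓ (ℓ + 1) L s).range = invAlg n ℓ L := by
  refine le_antisymm (range_phiMap_le_invAlg hL) fun f hf => ?_
  rw [f.as_sum]
  refine Subalgebra.sum_mem _ fun d hdf => ?_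
  rw [← mul_one (coeff d f), ← smul_eq_mul, ← smul_monomial]
  exact Subalgebra.smul_mem _
    (monomial_mem_range_of_mem_invAlg hL hs (monomial_mem_invAlg_of_mem_support hf hdf)) _

end Surjectivity

section Quasiminors

variable {n ℓ : ℕ} {L : ℕ → ℕ} {s : ℕ → ℕ}

theorem phiMap_Wq (hs : ∀ t, 1 ≤ t → t ≤ ℓ + 1 → s t = L t - L (t - 1) + 1) {t : ℕ}
    (ht1 : 1 ≤ t) (ht : t ≤ ℓ + 1) :
    phiMap n ℓ (ℓ + 1) L s (Wq (ℓ + 1) s t) = ∏ v ∈ Finset.Ico (L (t - 1)) (L t), xCA n ℓ v := by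
  have hst := hs t ht1 ht
  rw [Wq, map_prod]
  refine Finset.prod_nbij' (fun u => L t - u) (fun v => L t - v) ?_ ?_ ?_ ?_ fun u hu => ?_
  any_goals
    intro u hu
    simp only [Finset.mem_Icc, Finset.mem_Ico] at hu ⊢
    omega
  rw [Finset.mem_Icc] at hu
  rw [Zv, phiMap_X_zidx (by omega) (by rw [nj, if_neg (by omega)]; omega),
    zmon_mid (by omega) (by omega) (by omega) (by omega)]

variable (hL : IsTailSeq n ℓ L) (hs : ∀ t, 1 ≤ t → t ≤ ℓ + 1 → s t = L t - L (t - 1) + 1)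
include hL hs

theorem prod_phiMap_Wq {i b : ℕ} (hi : 1 ≤ i) (hib : i - 1 ≤ b) (hb : b ≤ ℓ + 1) :
    ∏ t ∈ Finset.Icc i b, phiMap n ℓ (ℓ + 1) L s (Wq (ℓ + 1) s t) =
      ∏ v ∈ Finset.Ico (L (i - 1)) (L b), xCA n ℓ v := by
  induction b, hib using Nat.le_induction with
  | base =>
    rw [Finset.Icc_eq_empty (by omega), Finset.Ico_self, Finset.prod_empty, Finset.prod_empty]
  | succ b hib ih =>
    rw [Finset.prod_Icc_succ_top (by omega), ih (by omega), phiMap_Wq hs (by omega) hb,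
      Nat.add_sub_cancel, Finset.prod_Ico_consecutive _
        (hL.mono (Set.mem_Iic.2 (by omega)) (Set.mem_Iic.2 (by omega)) hib)
        (hL.mono (Set.mem_Iic.2 (by omega)) (Set.mem_Iic.2 hb) (Nat.le_succ b))]

theorem phiMap_qm {i j : ℕ} (hi : 1 ≤ i) (hij : i < j) (hj : j ≤ ℓ + 2)
    (hs_top : s (ℓ + 2) = 0) : phiMap n ℓ (ℓ + 1) L s (qm (ℓ + 1) s i j) = 0 := by
  have hrow0 : ∀ t ≤ ℓ + 1, phiMap n ℓ (ℓ + 1) L s (Zv (ℓ + 1) s t 0) =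
      xC0 n ℓ (L t) * X (kArr n ℓ t) := fun t ht => by
    rw [Zv, phiMap_X_zidx (by omega) (zero_lt_nj t), zmon_row_zero hL ht]
  have hrowlast : ∀ t, 1 ≤ t → t ≤ ℓ + 2 → phiMap n ℓ (ℓ + 1) L s (Zv (ℓ + 1) s t (s t)) =
      xA0 n ℓ (L (t - 1)) * X (kArr n ℓ (t - 1)) := fun t ht1 ht => by
    refine (phiMap_X_zidx (by omega) ?_).trans (zmon_row_last hL ht1 ht (hs t ht1))
    unfold nj
    split_ifs with hc
    · rw [show t = ℓ + 2 by omega, hs_top]; omega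
    · omega
  have hab : L (i - 1) ≤ L (j - 1) :=
    hL.mono (Set.mem_Iic.2 (by omega)) (Set.mem_Iic.2 (by omega)) (by omega)
  have hbn : L (j - 1) ≤ n := hL.le_n (by omega)
  have hC : xC0 n ℓ (L (i - 1)) = xC0 n ℓ (L (j - 1)) *
      ∏ v ∈ Finset.Ico (L (i - 1)) (L (j - 1)), X (cc n ℓ (v + 1)) := by
    rw [xC0_eq_prod_Ico (hab.trans hbn), xC0_eq_prod_Ico hbn,
      ← Finset.prod_Ico_consecutive _ hab (by omega), mul_comm]
  have hA : xA0 n ℓ (L (j - 1)) = xA0 n ℓ (L (i - 1)) *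
      ∏ v ∈ Finset.Ico (L (i - 1)) (L (j - 1)), X (aa n ℓ v) := by
    rw [xA0, xA0, Finset.prod_range_mul_prod_Ico _ hab]
  rw [qm, map_sub, map_mul, map_mul, map_mul, map_prod, hrow0 _ (by omega),
    hrowlast j (by omega) hj, hrowlast i hi (by omega), hrow0 _ (by omega),
    prod_phiMap_Wq hL hs hi (by omega) (by omega), hC, hA]
  simp only [xCA, Finset.prod_mul_distrib]
  ring

end Quasiminors

theorem phi_onto_invariants_and_QDet_in_kernel_general
    -- Hirzebruch–Jung expansions r/a = [α_1,…,α_n], r/(r−a) = [β_1,…,β_m]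
    (n m ℓ : ℕ) (βs : List ℕ)
    (hβlen : βs.length = m)
    -- ℓ = Σ(α_i − 2), e = ℓ + 3 = m + 2
    (hm : m = ℓ + 1)
    -- l_h = tail vertex of k_h: weakly increasing, l_0 = 1, l_{ℓ+1} = n, with
    -- α_i − 2 of the extra arrows having tail i; Riemenschneider duality
    (L : ℕ → ℕ) (hL0 : L 0 = 1) (hLtop : L (ℓ + 1) = n)
    (hLmono : ∀ h₁ h₂, h₁ ≤ h₂ → h₂ ≤ ℓ + 1 → L h₁ ≤ L h₂)
    (hdual : ∀ t, 1 ≤ t → t ≤ m → βs.getD (t - 1) 0 = L t - L (t - 1) + 2) :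
    (AlgHom.range (phiMap n ℓ m L (fun t => βs.getD (t - 1) 0 - 1)) = invAlg n ℓ L) ∧
    (QDet m (fun t => βs.getD (t - 1) 0 - 1) ≤
      RingHom.ker (phiMap n ℓ m L (fun t => βs.getD (t - 1) 0 - 1))) ∧
    (∀ i j : ℕ, 1 ≤ i → i < j → j ≤ m + 1 →
      phiMap n ℓ m L (fun t => βs.getD (t - 1) 0 - 1)
        (qm m (fun t => βs.getD (t - 1) 0 - 1) i j) = 0) := by
  subst hm
  have hL : IsTailSeq n ℓ L := ⟨hL0, hLtop, fun _ _ _ h₂ h => hLmono _ _ h h₂⟩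
  have hs : ∀ t, 1 ≤ t → t ≤ ℓ + 1 → βs.getD (t - 1) 0 - 1 = L t - L (t - 1) + 1 :=
    fun t h1 h2 => by rw [hdual t h1 h2]; omega
  have hs_top : βs.getD (ℓ + 2 - 1) 0 - 1 = 0 := by
    rw [List.getD_eq_default _ _ (by omega)]
  have hq := fun i j (hi : 1 ≤ i) (hij : i < j) (hj : j ≤ ℓ + 2) =>
    phiMap_qm hL hs hi hij hj hs_top
  refine ⟨range_phiMap_eq_invAlg hL hs, ?_, hq⟩
  rw [QDet, Ideal.span_le]
  rintro _ ⟨i, j, hi, hij, hj, rfl⟩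
  exact hq i j hi hij hj

/-- the homomorphism `φ : ℂ[𝗓] → ℛ` maps onto the invariant ring `ℛ^G`,
and `QDet(𝗓)` is contained in the kernel of `φ`; in particular `φ(q_{i,j}) = 0` for every
quasiminor `q_{i,j}`.  Here `s_t = β_t − 1` (with the out-of-range convention
`s_{m+1} = 0`, automatic from `List.getD`). -/
theorem phi_onto_invariants_and_QDet_in_kernel
    -- the group 1/r(1,a) with r > a ≥ 1 coprime
    (r a : ℕ) (ha : 1 ≤ a) (hra : a < r) (hcop : Nat.Coprime r a)
    -- Hirzebruch–Jung expansions r/a = [α_1,…,α_n], r/(r−a) = [β_1,…,β_m]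
    (n m ℓ : ℕ) (αs βs : List ℕ) (hn1 : 1 ≤ n)
    (hαlen : αs.length = n) (hα2 : ∀ x ∈ αs, 2 ≤ x)
    (hαcf : hjcf (αs.map (fun x => (x : ℚ))) = (r : ℚ) / (a : ℚ))
    (hβlen : βs.length = m) (hβ2 : ∀ x ∈ βs, 2 ≤ x)
    (hβcf : hjcf (βs.map (fun x => (x : ℚ))) = (r : ℚ) / ((r : ℚ) - (a : ℚ)))
    -- ℓ = Σ(α_i − 2), e = ℓ + 3 = m + 2
    (hl : ℓ = ∑ i ∈ Finset.range n, (αs.getD i 0 - 2))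
    (hm : m = ℓ + 1)
    -- l_h = tail vertex of k_h: weakly increasing, l_0 = 1, l_{ℓ+1} = n, with
    -- α_i − 2 of the extra arrows having tail i; Riemenschneider duality
    (L : ℕ → ℕ) (hL0 : L 0 = 1) (hLtop : L (ℓ + 1) = n)
    (hLmono : ∀ h₁ h₂, h₁ ≤ h₂ → h₂ ≤ ℓ + 1 → L h₁ ≤ L h₂)
    (hLrange : ∀ h, 1 ≤ h → h ≤ ℓ → 1 ≤ L h ∧ L h ≤ n)
    (hmult : ∀ i, 1 ≤ i → i ≤ n →
      ((Finset.Icc 1 ℓ).filter (fun h => L h = i)).card = αs.getD (i - 1) 0 - 2)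
    (hdual : ∀ t, 1 ≤ t → t ≤ m → βs.getD (t - 1) 0 = L t - L (t - 1) + 2) :
    (AlgHom.range (phiMap n ℓ m L (fun t => βs.getD (t - 1) 0 - 1)) = invAlg n ℓ L) ∧
    (QDet m (fun t => βs.getD (t - 1) 0 - 1) ≤
      RingHom.ker (phiMap n ℓ m L (fun t => βs.getD (t - 1) 0 - 1))) ∧
    (∀ i j : ℕ, 1 ≤ i → i < j → j ≤ m + 1 →
      phiMap n ℓ m L (fun t => βs.getD (t - 1) 0 - 1)
        (qm m (fun t => βs.getD (t - 1) 0 - 1) i j) = 0) :=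
  phi_onto_invariants_and_QDet_in_kernel_general n m ℓ βs hβlen hm L hL0 hLtop hLmono hdual
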